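/- Define c̃(ρ) = (erf⁻¹(ρ))². The inverse of its derivative c̃' is given in closed form by (c̃')⁻¹(x) = erf(√(W(2x²/π)/2)) for x > 0, where W is the principal branch of the Lambert W function. -/

import Mathlib

/-- The Gaussian error function `erf z = (2/√π) ∫₀^z e^{-t²} dt`. -/
noncomputable def erf (z : ℝ) : ℝ :=
  (2 / Real.sqrt Real.pi) * ∫ t in (0:ℝ)..z, Real.exp (-t ^ 2)

/-- The inverse of the Gaussian error function. -/
noncomputable def erfInv : ℝ → ℝ := Function.invFun erf

/-- The cost function `c̃(ρ) = (erfInv ρ)²`. -/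
noncomputable def ctilde (ρ : ℝ) : ℝ := erfInv ρ ^ 2

/-- The principal branch of the Lambert W function (on the nonnegative reals it is the
unique inverse of `w ↦ w·eʷ`). -/
noncomputable def lambertW : ℝ → ℝ := Function.invFun (fun w : ℝ => w * Real.exp w)

/-!
For `t > 0` the inverse function rule gives `c̃'(erf t) = √π · t · e^{t²}`, hence
`2 c̃'(erf t)² / π = 2t² · e^{2t²}`. So `x = c̃'(erf t)` exactly when `2t² = W(2x²/π)`,
and both directions of the inverse relation follow.
-/

open Real Set Filter Topology MeasureTheory

lemma hasDerivAt_erf (z : ℝ) : HasDerivAt erf (2 / √π * exp (-z ^ 2)) z := by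
  have hc : Continuous fun t : ℝ => exp (-t ^ 2) := by fun_prop
  exact (intervalIntegral.integral_hasDerivAt_right (hc.intervalIntegrable 0 z)
    hc.aestronglyMeasurable.stronglyMeasurableAtFilter hc.continuousAt).const_mul (2 / √π)

lemma continuous_erf : Continuous erf :=
  continuous_iff_continuousAt.2 fun z => (hasDerivAt_erf z).continuousAt

lemma strictMono_erf : StrictMono erf := by
  refine strictMono_of_deriv_pos fun z => ?_
  rw [(hasDerivAt_erf z).deriv]
  have : 0 < √π := sqrt_pos.2 pi_pos
  positivity

lemma erf_zero : erf 0 = 0 := by simp [erf]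

lemma tendsto_erf_atTop : Tendsto erf atTop (𝓝 1) := by
  have hint : IntegrableOn (fun t : ℝ => exp (-t ^ 2)) (Ioi 0) := by
    simpa using (integrable_exp_neg_mul_sq one_pos).integrableOn
  have hval : ∫ t in Ioi (0:ℝ), exp (-t ^ 2) = √π / 2 := by
    simpa using integral_gaussian_Ioi 1
  have h := (intervalIntegral_tendsto_integral_Ioi 0 hint tendsto_id).const_mul
    (2 / √π)
  have hπ : √π ≠ 0 := (sqrt_pos.2 pi_pos).ne'
  rwa [hval, div_mul_div_cancel₀ hπ, div_self two_ne_zero] at h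

lemma erf_lt_one (z : ℝ) : erf z < 1 :=
  (strictMono_erf (lt_add_one z)).trans_le <| ge_of_tendsto tendsto_erf_atTop <|
    (eventually_ge_atTop (z + 1)).mono fun _ hy => strictMono_erf.monotone hy

lemma image_erf_Ioi : erf '' Ioi 0 = Ioo 0 1 := by
  refine Subset.antisymm ?_ fun ρ hρ => ?_
  · rintro _ ⟨t, ht, rfl⟩
    exact ⟨erf_zero ▸ strictMono_erf ht, erf_lt_one t⟩
  obtain ⟨y, hy⟩ := (tendsto_erf_atTop.eventually (eventually_gt_nhds hρ.2)).exists
  have h0 : erf 0 < ρ := by rw [erf_zero]; exact hρ.1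
  obtain ⟨t, ht, rfl⟩ := intermediate_value_Ioo (strictMono_erf.lt_iff_lt.1 (h0.trans hy)).le
    continuous_erf.continuousOn ⟨h0, hy⟩
  exact ⟨t, ht.1, rfl⟩

lemma erfInv_erf (t : ℝ) : erfInv (erf t) = t :=
  Function.leftInverse_invFun strictMono_erf.injective t

lemma erf_erfInv {ρ : ℝ} (hρ : ρ ∈ Ioo (0:ℝ) 1) : erf (erfInv ρ) = ρ := by
  rw [← image_erf_Ioi] at hρ
  obtain ⟨t, -, rfl⟩ := hρ
  rw [erfInv_erf]

lemma image_erfInv_Ioo : erfInv '' Ioo 0 1 = Ioi 0 := by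
  rw [← image_erf_Ioi, image_image]
  simp only [erfInv_erf, image_id']

lemma erfInv_pos {ρ : ℝ} (hρ : ρ ∈ Ioo (0:ℝ) 1) : 0 < erfInv ρ :=
  image_erfInv_Ioo.subset (mem_image_of_mem _ hρ)

lemma monotoneOn_erfInv : MonotoneOn erfInv (Ioo 0 1) := fun a ha b hb hab => by
  rw [← strictMono_erf.le_iff_le, erf_erfInv ha, erf_erfInv hb]
  exact hab

lemma hasDerivAt_erfInv {ρ : ℝ} (hρ : ρ ∈ Ioo (0:ℝ) 1) :
    HasDerivAt erfInv (2 / √π * exp (-erfInv ρ ^ 2))⁻¹ ρ := by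
  have hcont : ContinuousAt erfInv ρ :=
    continuousAt_of_monotoneOn_of_image_mem_nhds monotoneOn_erfInv (isOpen_Ioo.mem_nhds hρ)
      (image_erfInv_Ioo ▸ Ioi_mem_nhds (erfInv_pos hρ))
  have : 0 < √π := sqrt_pos.2 pi_pos
  exact HasDerivAt.of_local_left_inverse hcont (hasDerivAt_erf _) (by positivity) <|
    eventually_of_mem (isOpen_Ioo.mem_nhds hρ) fun _ hy => erf_erfInv hy

lemma deriv_ctilde {ρ : ℝ} (hρ : ρ ∈ Ioo (0:ℝ) 1) :
    deriv ctilde ρ = √π * erfInv ρ * exp (erfInv ρ ^ 2) := by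
  have h : HasDerivAt ctilde (↑2 * erfInv ρ ^ 1 * (2 / √π * exp (-erfInv ρ ^ 2))⁻¹) ρ :=
    (hasDerivAt_erfInv hρ).pow 2
  rw [h.deriv, exp_neg]
  have : √π ≠ 0 := (sqrt_pos.2 pi_pos).ne'
  field_simp

lemma deriv_ctilde_erf {t : ℝ} (ht : 0 < t) :
    deriv ctilde (erf t) = √π * t * exp (t ^ 2) := by
  rw [deriv_ctilde (image_erf_Ioi ▸ mem_image_of_mem erf ht), erfInv_erf]

lemma two_mul_sq_sqrt_pi_mul_exp_div_pi (t : ℝ) :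
    2 * (√π * t * exp (t ^ 2)) ^ 2 / π = 2 * t ^ 2 * exp (2 * t ^ 2) := by
  rw [mul_pow, mul_pow, sq_sqrt pi_pos.le, ← exp_nat_mul]
  push_cast
  field_simp

lemma strictMonoOn_mul_exp : StrictMonoOn (fun w : ℝ => w * exp w) (Ici 0) :=
  fun a ha _ _ hab => mul_lt_mul'' hab (exp_strictMono hab) ha (exp_pos a).le

lemma exists_mul_exp_eq {z : ℝ} (hz : 0 ≤ z) : ∃ w, w * exp w = z := by
  obtain ⟨w, -, hw⟩ := intermediate_value_Icc hz (f := fun w : ℝ => w * exp w)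
    (by fun_prop) ⟨by simpa using hz, le_mul_of_one_le_right hz (one_le_exp hz)⟩
  exact ⟨w, hw⟩

lemma lambertW_mul_exp_lambertW {z : ℝ} (hz : 0 ≤ z) : lambertW z * exp (lambertW z) = z :=
  Function.invFun_eq (f := fun w : ℝ => w * exp w) (exists_mul_exp_eq hz)

lemma lambertW_pos {z : ℝ} (hz : 0 < z) : 0 < lambertW z := by
  by_contra! h
  have := mul_nonpos_of_nonpos_of_nonneg h (exp_pos (lambertW z)).le
  linarith [lambertW_mul_exp_lambertW hz.le]

lemma lambertW_mul_exp {w : ℝ} (hw : 0 < w) : lambertW (w * exp w) = w := by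
  have hz : 0 < w * exp w := mul_pos hw (exp_pos w)
  exact strictMonoOn_mul_exp.injOn (lambertW_pos hz).le hw.le (lambertW_mul_exp_lambertW hz.le)

/-- The inverse of `c̃'` is `x ↦ erf(√(W(2x²/π)/2))` for `x > 0`: applying `c̃'` to this
expression recovers `x`, and applying the expression to `c̃'(ρ)` recovers `ρ ∈ (0,1)`. -/
theorem ctilde_deriv_inverse :
    (∀ x : ℝ, 0 < x →
      deriv ctilde (erf (Real.sqrt (lambertW (2 * x ^ 2 / Real.pi) / 2))) = x) ∧
    (∀ ρ ∈ Set.Ioo (0:ℝ) 1,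
      erf (Real.sqrt (lambertW (2 * (deriv ctilde ρ) ^ 2 / Real.pi) / 2)) = ρ) := by
  constructor
  · intro x hx
    have hz : 0 < 2 * x ^ 2 / π := by positivity
    set w := lambertW (2 * x ^ 2 / π)
    have hw : 0 < w := lambertW_pos hz
    set t := √(w / 2)
    have ht : 0 < t := sqrt_pos.2 (half_pos hw)
    have htw : 2 * t ^ 2 = w := by rw [sq_sqrt (half_pos hw).le]; ring
    have hsq : 2 * (√π * t * exp (t ^ 2)) ^ 2 / π = 2 * x ^ 2 / π := by
      rw [two_mul_sq_sqrt_pi_mul_exp_div_pi, htw, lambertW_mul_exp_lambertW hz.le]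
    rw [deriv_ctilde_erf ht, ← sq_eq_sq₀ (by positivity) hx.le]
    field_simp at hsq
    linarith
  · intro ρ hρ
    have ht := erfInv_pos hρ
    rw [deriv_ctilde hρ, two_mul_sq_sqrt_pi_mul_exp_div_pi, lambertW_mul_exp (by positivity),
      mul_div_cancel_left₀ _ two_ne_zero, sqrt_sq ht.le, erf_erfInv hρ]
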